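/- arXiv:2312.15394 — 2 statements merged into one kernel-verified Lean document; each statement's English description precedes it below -/
import Mathlib

section
/- Let A, B be n×n complex positive definite matrices. For every t ∈ [0, 1]: A^{-1} ♯ (A ♮_t B) ≤ A^{-1} ♯ (A ◇_t B) and B^{-1} ♯ (A ♮_t B) ≤ B^{-1} ♯ (A ◇_t B) in the Loewner order. -/
open scoped ComplexOrder Matrix

noncomputable section

/-- Real power of a (positive definite) matrix via the continuous functional calculus. -/
def mpow {n : ℕ} (A : Matrix (Fin n) (Fin n) ℂ) (t : ℝ) : Matrix (Fin n) (Fin n) ℂ :=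
  cfc (fun x : ℝ => x ^ t) A

/-- The matrix logarithm of a (positive definite) matrix via the continuous functional calculus. -/
def mlog {n : ℕ} (A : Matrix (Fin n) (Fin n) ℂ) : Matrix (Fin n) (Fin n) ℂ :=
  cfc Real.log A

/-- The metric geometric mean `A ♯ₜ B = A^{1/2} (A^{-1/2} B A^{-1/2})^t A^{1/2}`.
`A ♯ B` is `gmean A B (1/2)`. -/
def gmean {n : ℕ} (A B : Matrix (Fin n) (Fin n) ℂ) (t : ℝ) : Matrix (Fin n) (Fin n) ℂ :=
  mpow A (1/2) * mpow (mpow A (-(1/2)) * B * mpow A (-(1/2))) t * mpow A (1/2)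

/-- The Loewner order: `A ≤ B` iff `B - A` is positive semidefinite. -/
def LoewnerLE {n : ℕ} (A B : Matrix (Fin n) (Fin n) ℂ) : Prop :=
  (B - A).PosSemidef

/-- The near order: `A ⪯ B` iff `I ≤ A⁻¹ ♯ B` in the Loewner order. -/
def NearLE {n : ℕ} (A B : Matrix (Fin n) (Fin n) ℂ) : Prop :=
  LoewnerLE 1 (gmean A⁻¹ B (1/2))

/-- The spectral geometric mean `A ♮ₜ B = (A⁻¹ ♯ B)^t A (A⁻¹ ♯ B)^t`. -/
def smean {n : ℕ} (A B : Matrix (Fin n) (Fin n) ℂ) (t : ℝ) : Matrix (Fin n) (Fin n) ℂ :=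
  mpow (gmean A⁻¹ B (1/2)) t * A * mpow (gmean A⁻¹ B (1/2)) t

/-- The Wasserstein mean `A ◇ₜ B = [(1-t)I + t(A⁻¹ ♯ B)] A [(1-t)I + t(A⁻¹ ♯ B)]`. -/
def wmean {n : ℕ} (A B : Matrix (Fin n) (Fin n) ℂ) (t : ℝ) : Matrix (Fin n) (Fin n) ℂ :=
  (((1 - t : ℝ) : ℂ) • (1 : Matrix (Fin n) (Fin n) ℂ) + ((t : ℝ) : ℂ) • gmean A⁻¹ B (1/2)) * A *
    (((1 - t : ℝ) : ℂ) • (1 : Matrix (Fin n) (Fin n) ℂ) + ((t : ℝ) : ℂ) • gmean A⁻¹ B (1/2))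

/-- The arithmetic mean `A ∇ₜ B = (1-t)A + tB`. -/
def amean {n : ℕ} (A B : Matrix (Fin n) (Fin n) ℂ) (t : ℝ) : Matrix (Fin n) (Fin n) ℂ :=
  ((1 - t : ℝ) : ℂ) • A + ((t : ℝ) : ℂ) • B

/-- The matrix absolute value `|X| = (XᴴX)^{1/2}`. -/
def matAbs {n : ℕ} (X : Matrix (Fin n) (Fin n) ℂ) : Matrix (Fin n) (Fin n) ℂ :=
  mpow (Xᴴ * X) (1/2)

/-- The eigenvalues of a Hermitian matrix listed in nonincreasing order:
`eigDesc hA i` is `λ_{i+1}(A)`, so `eigDesc hA 0 = λ₁(A) ≥ eigDesc hA 1 = λ₂(A) ≥ ⋯`. -/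
def eigDesc {n : ℕ} {A : Matrix (Fin n) (Fin n) ℂ} (hA : A.IsHermitian) : Fin n → ℝ :=
  fun i => (hA.eigenvalues ∘ Tuple.sort hA.eigenvalues) i.rev

/-!
Put `C = A⁻¹ ♯ B`, the positive solution of the Riccati equation `C A C = B`. Both means are
congruences of `A` by functions of `C`: `A ♮ₜ B = f(C) A f(C)` with `f(x) = xᵗ` and
`A ◇ₜ B = g(C) A g(C)` with `g(x) = 1 - t + t x`. The positive solution `Y` of `Y A Y = X` is
unique, so `A⁻¹ ♯ (Y A Y) = Y`, and the first inequality becomes `f(C) ≤ g(C)`, i.e. the weighted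
AM-GM inequality `xᵗ ≤ 1 - t + t x` on the spectrum of `C`. Since `C A C = B`, also
`h(C) A h(C) = (h(C) C⁻¹) B (h(C) C⁻¹)`, so the second inequality becomes `f(C) C⁻¹ ≤ g(C) C⁻¹`:
the same scalar inequality divided by `x > 0`.
-/

open scoped MatrixOrder

lemma Real.rpow_le_one_sub_add_mul {x t : ℝ} (hx : 0 ≤ x) (ht0 : 0 ≤ t) (ht1 : t ≤ 1) :
    x ^ t ≤ 1 - t + t * x :=
  calc x ^ t = (1 + (x - 1)) ^ t := by rw [add_sub_cancel]
    _ ≤ 1 + t * (x - 1) := rpow_one_add_le_one_add_mul_self (by linarith) ht0 ht1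
    _ = 1 - t + t * x := by ring

section

variable {m 𝕜 : Type*} [Fintype m] [DecidableEq m] [RCLike 𝕜]

lemma Matrix.continuousOn_spectrum (f : ℝ → ℝ) (C : Matrix m m 𝕜) :
    ContinuousOn f (spectrum ℝ C) :=
  Matrix.finite_real_spectrum.continuousOn f

lemma Matrix.PosDef.rpow_neg_half_mul_self {P : Matrix m m 𝕜} (hP : P.PosDef) :
    P ^ (-(1/2) : ℝ) * P ^ (-(1/2) : ℝ) = P⁻¹ := by
  rw [← CFC.rpow_add hP.isUnit, Matrix.nonsing_inv_eq_ringInverse,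
    CFC.inverse_eq_rpow_neg_one hP.isStrictlyPositive]
  norm_num

lemma cfc_mul_mul_cfc_eq_cfc_div {C : Matrix m m 𝕜} (hC : C.PosDef) (f : ℝ → ℝ)
    (A : Matrix m m 𝕜) :
    cfc f C * A * cfc f C =
      cfc (fun x => f x / x) C * (C * A * C) * cfc (fun x => f x / x) C := by
  have hf : cfc f C = cfc (fun x => f x / x) C * cfc (fun x : ℝ => x) C := by
    rw [← cfc_mul _ _ C (C.continuousOn_spectrum _) (C.continuousOn_spectrum _)]
    exact cfc_congr fun x hx =>
      (div_mul_cancel₀ _ (hC.isStrictlyPositive.spectrum_pos hx).ne').symm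
  have hf' : cfc f C = cfc (fun x : ℝ => x) C * cfc (fun x => f x / x) C :=
    hf.trans (cfc_commute_cfc _ _ C).eq
  calc cfc f C * A * cfc f C
      = cfc (fun x => f x / x) C * C * A * (C * cfc (fun x => f x / x) C) := by
        nth_rewrite 1 [hf]
        rw [hf', cfc_id' ℝ C]
    _ = cfc (fun x => f x / x) C * (C * A * C) * cfc (fun x => f x / x) C := by
        simp only [mul_assoc]

lemma cfc_const_add_const_mul {C : Matrix m m ℂ} (hC : IsSelfAdjoint C) (a b : ℝ) :
    cfc (fun x : ℝ => a + b * x) C = (a : ℂ) • 1 + (b : ℂ) • C := by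
  rw [cfc_const_add a (fun x => b * x) C (C.continuousOn_spectrum _) hC,
    cfc_const_mul b _ _ (C.continuousOn_spectrum _), cfc_id' ℝ C hC,
    Algebra.algebraMap_eq_smul_one, Complex.coe_smul, Complex.coe_smul]

end

section

variable {n : ℕ}

lemma mpow_eq_rpow {A : Matrix (Fin n) (Fin n) ℂ} (hA : 0 ≤ A) (t : ℝ) : mpow A t = A ^ t :=
  (CFC.rpow_eq_cfc_real hA).symm

lemma gmean_half_eq {P X : Matrix (Fin n) (Fin n) ℂ} (hP : P.PosDef) (hX : 0 ≤ X) :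
    gmean P X (1/2) =
      P ^ (1/2 : ℝ) * CFC.sqrt (P ^ (-(1/2) : ℝ) * X * P ^ (-(1/2) : ℝ)) * P ^ (1/2 : ℝ) := by
  rw [gmean, mpow_eq_rpow hP.posSemidef.nonneg, mpow_eq_rpow hP.posSemidef.nonneg,
    mpow_eq_rpow (CFC.rpow_nonneg.isSelfAdjoint.conjugate_nonneg hX), CFC.sqrt_eq_rpow]

lemma gmean_posDef {P X : Matrix (Fin n) (Fin n) ℂ} (hP : P.PosDef) (hX : X.PosDef) (t : ℝ) :
    (gmean P X t).PosDef := by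
  have hP' := hP.isStrictlyPositive
  have hPX : IsStrictlyPositive (P ^ (-(1/2) : ℝ) * X * P ^ (-(1/2) : ℝ)) :=
    IsStrictlyPositive.conjugate_of_isUnit_of_isSelfAdjoint _ _ (hP'.rpow _ _).isUnit
      (ha := hX.isStrictlyPositive)
  rw [gmean, mpow_eq_rpow hP.posSemidef.nonneg, mpow_eq_rpow hP.posSemidef.nonneg,
    mpow_eq_rpow hPX.nonneg]
  exact Matrix.IsStrictlyPositive.posDef <|
    IsStrictlyPositive.conjugate_of_isUnit_of_isSelfAdjoint _ _ (hP'.rpow _ _).isUnit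
      (ha := hPX.rpow _ t)

lemma gmean_half_mul_inv_mul_gmean_half {P X : Matrix (Fin n) (Fin n) ℂ} (hP : P.PosDef)
    (hX : 0 ≤ X) : gmean P X (1/2) * P⁻¹ * gmean P X (1/2) = X := by
  have hP' := hP.isStrictlyPositive
  rw [gmean_half_eq hP hX, ← hP.rpow_neg_half_mul_self]
  set S := P ^ (1/2 : ℝ)
  set T := P ^ (-(1/2) : ℝ)
  set K := CFC.sqrt (T * X * T)
  have hST : S * T = 1 := CFC.rpow_mul_rpow_neg _
  have hTS : T * S = 1 := CFC.rpow_neg_mul_rpow _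
  have hKK : K * K = T * X * T :=
    CFC.sqrt_mul_sqrt_self _ (CFC.rpow_nonneg.isSelfAdjoint.conjugate_nonneg hX)
  calc S * K * S * (T * T) * (S * K * S) = S * K * (S * T) * (T * S) * K * S := by
        simp only [mul_assoc]
    _ = S * (K * K) * S := by rw [hST, hTS]; simp only [mul_one, mul_assoc]
    _ = (S * T) * X * (T * S) := by rw [hKK]; simp only [mul_assoc]
    _ = X := by rw [hST, hTS, one_mul, mul_one]

lemma gmean_half_mul_inv_mul_self {P Y : Matrix (Fin n) (Fin n) ℂ} (hP : P.PosDef) (hY : 0 ≤ Y) :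
    gmean P (Y * P⁻¹ * Y) (1/2) = Y := by
  have hP' := hP.isStrictlyPositive
  rw [gmean_half_eq hP (hY.isSelfAdjoint.conjugate_nonneg hP.inv.posSemidef.nonneg),
    ← hP.rpow_neg_half_mul_self]
  set S := P ^ (1/2 : ℝ)
  set T := P ^ (-(1/2) : ℝ)
  have hST : S * T = 1 := CFC.rpow_mul_rpow_neg _
  have hTS : T * S = 1 := CFC.rpow_neg_mul_rpow _
  have hsq : T * (Y * (T * T) * Y) * T = (T * Y * T) * (T * Y * T) := by simp only [mul_assoc]
  rw [hsq, CFC.sqrt_mul_self _ (CFC.rpow_nonneg.isSelfAdjoint.conjugate_nonneg hY)]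
  calc S * (T * Y * T) * S = (S * T) * Y * (T * S) := by simp only [mul_assoc]
    _ = Y := by rw [hST, hTS, one_mul, mul_one]

lemma gmean_inv_half_mul_mul_gmean_inv_half {A B : Matrix (Fin n) (Fin n) ℂ} (hA : A.PosDef)
    (hB : 0 ≤ B) : gmean A⁻¹ B (1/2) * A * gmean A⁻¹ B (1/2) = B := by
  simpa only [Matrix.nonsing_inv_nonsing_inv A (A.isUnit_iff_isUnit_det.mp hA.isUnit)]
    using gmean_half_mul_inv_mul_gmean_half hA.inv hB

lemma gmean_inv_half_mul_mul_self {A Y : Matrix (Fin n) (Fin n) ℂ} (hA : A.PosDef) (hY : 0 ≤ Y) :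
    gmean A⁻¹ (Y * A * Y) (1/2) = Y := by
  simpa only [Matrix.nonsing_inv_nonsing_inv A (A.isUnit_iff_isUnit_det.mp hA.isUnit)]
    using gmean_half_mul_inv_mul_self hA.inv hY

lemma gmean_inv_cfc_mul_mul_cfc {A B : Matrix (Fin n) (Fin n) ℂ} (hA : A.PosDef) (hB : B.PosDef)
    {f : ℝ → ℝ} (hf : ∀ x ∈ spectrum ℝ (gmean A⁻¹ B (1/2)), 0 ≤ f x) :
    gmean B⁻¹ (cfc f (gmean A⁻¹ B (1/2)) * A * cfc f (gmean A⁻¹ B (1/2))) (1/2) =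
      cfc (fun x => f x / x) (gmean A⁻¹ B (1/2)) := by
  have hC := gmean_posDef hA.inv hB (1/2)
  rw [cfc_mul_mul_cfc_eq_cfc_div hC, gmean_inv_half_mul_mul_gmean_inv_half hA hB.posSemidef.nonneg]
  exact gmean_inv_half_mul_mul_self hB <| cfc_nonneg fun x hx =>
    div_nonneg (hf x hx) (hC.isStrictlyPositive.spectrum_pos hx).le

end

/-- for `t ∈ [0,1]`, `A⁻¹ ♯ (A ♮ₜ B) ≤ A⁻¹ ♯ (A ◇ₜ B)` and
`B⁻¹ ♯ (A ♮ₜ B) ≤ B⁻¹ ♯ (A ◇ₜ B)` in the Loewner order. -/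
theorem gmean_with_smean_le_gmean_with_wmean {n : ℕ} (A B : Matrix (Fin n) (Fin n) ℂ)
    (hA : A.PosDef) (hB : B.PosDef) :
    ∀ t : ℝ, 0 ≤ t → t ≤ 1 →
      LoewnerLE (gmean A⁻¹ (smean A B t) (1/2)) (gmean A⁻¹ (wmean A B t) (1/2)) ∧
      LoewnerLE (gmean B⁻¹ (smean A B t) (1/2)) (gmean B⁻¹ (wmean A B t) (1/2)) := by
  intro t ht0 ht1
  set C := gmean A⁻¹ B (1/2)
  have hC : C.PosDef := gmean_posDef hA.inv hB _
  have hspec : ∀ x ∈ spectrum ℝ C, 0 < x := fun x hx => hC.isStrictlyPositive.spectrum_pos hx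
  set f : ℝ → ℝ := fun x => x ^ t
  set g : ℝ → ℝ := fun x => 1 - t + t * x
  have hsmean : smean A B t = cfc f C * A * cfc f C := rfl
  have hwmean : wmean A B t = cfc g C * A * cfc g C := by
    rw [cfc_const_add_const_mul hC.isHermitian]; rfl
  have hf : ∀ x ∈ spectrum ℝ C, 0 ≤ f x := fun x hx => Real.rpow_nonneg (hspec x hx).le t
  have hg : ∀ x ∈ spectrum ℝ C, 0 ≤ g x := fun x hx =>
    add_nonneg (sub_nonneg.2 ht1) (mul_nonneg ht0 (hspec x hx).le)
  have hfg : ∀ x ∈ spectrum ℝ C, f x ≤ g x := fun x hx =>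
    Real.rpow_le_one_sub_add_mul (hspec x hx).le ht0 ht1
  rw [hsmean, hwmean]
  constructor
  · rw [gmean_inv_half_mul_mul_self hA (cfc_nonneg hf),
      gmean_inv_half_mul_mul_self hA (cfc_nonneg hg)]
    exact cfc_mono hfg
  · rw [gmean_inv_cfc_mul_mul_cfc hA hB hf, gmean_inv_cfc_mul_mul_cfc hA hB hg]
    exact cfc_mono (fun x hx => div_le_div_of_nonneg_right (hfg x hx) (hspec x hx).le)
      (C.continuousOn_spectrum _) (C.continuousOn_spectrum _)
end
end

section
/- Let A, B be n×n complex positive definite matrices and t ∈ (0, 1). If any one of the following Loewner-order inequalities holds: (1) A^{-1} ◇_t A ≤ A^{-1} ◇_t B; (2) B^{-1} ◇_t B ≤ A^{-1} ◇_t B; (3) B^{-1} ◇_t A ≤ A^{-1} ◇_t A; (4) B^{-1} ◇_t A ≤ B^{-1} ◇_t B; then A ≤ B in the Loewner order. -/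
/-!
Conjugating by `A^{-1/2}` (first inequality) or by `S A^{1/2}`, where
`S = (A^{-1/2} B A^{-1/2})^{1/2}` (second inequality), turns the hypothesis into `U² ≤ V²`
for two positive definite matrices `U`, `V` whose difference is a positive multiple of
`S - 1`. As `V² - U²` is the symmetrisation of `(V - U)(U + V)` with `U + V > 0`, testing on
eigenvectors of `V - U` gives `U ≤ V`, so `1 ≤ S`, i.e. `1 ≤ A^{-1/2} B A^{-1/2}`, i.e.
`A ≤ B`. The third and fourth inequalities are the reverses of the second and first with `A`
and `B` exchanged, and the same argument gives `S ≤ 1` for the exchanged pair.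
-/

open scoped ComplexOrder Matrix

noncomputable section

open scoped MatrixOrder

namespace Matrix

variable {𝕜 m : Type*} [RCLike 𝕜] [Fintype m] [DecidableEq m]

/-- Test `T` on its eigenvectors: there `T * K + K * T` has quadratic form `2 λ ⟪v, K v⟫`. -/
theorem PosSemidef.of_mul_add_mul_posDef {T K : Matrix m m 𝕜} (hT : T.IsHermitian)
    (hK : K.PosDef) (h : (T * K + K * T).PosSemidef) : T.PosSemidef := by
  refine hT.posSemidef_iff_eigenvalues_nonneg.mpr fun i => ?_
  set v : m → 𝕜 := ⇑(hT.eigenvectorBasis i)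
  set r := hT.eigenvalues i
  have hv : v ≠ 0 := fun h0 =>
    hT.eigenvectorBasis.orthonormal.ne_zero i (WithLp.ofLp_injective 2 h0)
  have hTv : T *ᵥ v = (r : 𝕜) • v := by
    rw [hT.mulVec_eigenvectorBasis i, RCLike.real_smul_eq_coe_smul (K := 𝕜)]
  have hvT : star v ᵥ* T = (r : 𝕜) • star v := by
    rw [← hT.eq, ← star_mulVec, hTv, star_smul, RCLike.star_def, RCLike.conj_ofReal]
  have hquad : star v ⬝ᵥ ((T * K + K * T) *ᵥ v) =
      ((2 * r : ℝ) : 𝕜) * (star v ⬝ᵥ (K *ᵥ v)) := by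
    rw [add_mulVec, ← mulVec_mulVec, ← mulVec_mulVec, dotProduct_add, dotProduct_mulVec, hvT,
      hTv, mulVec_smul, dotProduct_smul, smul_dotProduct]
    push_cast
    simp only [smul_eq_mul]
    ring
  have hnonneg := h.re_dotProduct_nonneg v
  rw [hquad, RCLike.re_ofReal_mul] at hnonneg
  show 0 ≤ r
  nlinarith [hK.re_dotProduct_pos hv]

/-- `V² - U² = ((V - U)(U + V) + (U + V)(V - U)) / 2`. -/
theorem le_of_mul_self_le_mul_self {U V : Matrix m m 𝕜} (hU : U.IsHermitian)
    (hV : V.IsHermitian) (hUV : (U + V).PosDef) (h : U * U ≤ V * V) : U ≤ V := by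
  refine PosSemidef.of_mul_add_mul_posDef (hV.sub hU) hUV ?_
  rw [show (V - U) * (U + V) + (U + V) * (V - U) = (V * V - U * U) + (V * V - U * U) by
    noncomm_ring]
  exact h.add h

theorem PosDef.conj_posDef {X Y : Matrix m m 𝕜} (hX : X.PosDef) (hY : Y.PosDef) :
    (Y * X * Y).PosDef := by
  simpa only [hY.isHermitian.star_eq] using
    (Matrix.IsUnit.posDef_star_left_conjugate_iff hY.isUnit).mpr hX

protected theorem PosDef.inv_inv {X : Matrix m m 𝕜} (hX : X.PosDef) : X⁻¹⁻¹ = X :=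
  nonsing_inv_nonsing_inv X ((isUnit_iff_isUnit_det X).mp hX.isUnit)

theorem continuousOn_spectrum_real (X : Matrix m m 𝕜) (f : ℝ → ℝ) :
    ContinuousOn f (spectrum ℝ X) :=
  X.finite_real_spectrum.continuousOn f

end Matrix

section mpow

variable {n : ℕ} {A : Matrix (Fin n) (Fin n) ℂ}

lemma isHermitian_mpow (t : ℝ) : (mpow A t).IsHermitian := cfc_predicate _ _

lemma mpow_one (hA : A.IsHermitian) : mpow A 1 = A := by
  rw [mpow]
  conv_rhs => rw [← cfc_id' ℝ A hA]
  exact cfc_congr fun x _ => Real.rpow_one x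

lemma mpow_zero (hA : A.IsHermitian) : mpow A 0 = 1 := by
  simp only [mpow, Real.rpow_zero]
  exact cfc_const_one ℝ A

lemma one_mpow (t : ℝ) : mpow (1 : Matrix (Fin n) (Fin n) ℂ) t = 1 := by
  rw [mpow, ← map_one (algebraMap ℝ _), cfc_algebraMap, Real.one_rpow]

lemma mpow_mul_mpow (hA : A.PosDef) (s t : ℝ) : mpow A s * mpow A t = mpow A (s + t) := by
  rw [mpow, mpow, mpow,
    ← cfc_mul _ _ A (A.continuousOn_spectrum_real _) (A.continuousOn_spectrum_real _)]
  exact cfc_congr fun x hx => (Real.rpow_add (hA.isStrictlyPositive.spectrum_pos hx) s t).symm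

lemma posDef_mpow (hA : A.PosDef) (t : ℝ) : (mpow A t).PosDef := by
  rw [← Matrix.isStrictlyPositive_iff_posDef, mpow,
    cfc_isStrictlyPositive_iff _ _ (A.continuousOn_spectrum_real _)]
  exact fun x hx => Real.rpow_pos_of_pos (hA.isStrictlyPositive.spectrum_pos hx) t

lemma one_le_of_one_le_mpow (hA : A.PosSemidef) {t : ℝ} (ht : 0 < t) (h : 1 ≤ mpow A t) :
    1 ≤ A := by
  rw [mpow, one_le_cfc_iff _ _ (A.continuousOn_spectrum_real _)] at h
  refine CFC.one_le (R := ℝ) (fun x hx => ?_) hA.isHermitian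
  by_contra! hx1
  exact (h x hx).not_gt (Real.rpow_lt_one (spectrum_nonneg_of_nonneg hA.nonneg hx) hx1 ht)

lemma le_one_of_mpow_le_one (hA : A.IsHermitian) {t : ℝ} (ht : 0 < t) (h : mpow A t ≤ 1) :
    A ≤ 1 := by
  rw [mpow, cfc_le_one_iff _ _ (A.continuousOn_spectrum_real _)] at h
  refine CFC.le_one (R := ℝ) (fun x hx => ?_) hA
  by_contra! hx1
  exact (h x hx).not_gt (Real.one_lt_rpow hx1 ht)

lemma mpow_half_mul_self (hA : A.PosDef) : mpow A (1/2) * mpow A (1/2) = A := by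
  rw [mpow_mul_mpow hA]
  norm_num [mpow_one hA.isHermitian]

lemma mpow_half_mul_mpow_neg_half (hA : A.PosDef) : mpow A (1/2) * mpow A (-(1/2)) = 1 := by
  rw [mpow_mul_mpow hA, add_neg_cancel, mpow_zero hA.isHermitian]

lemma mpow_neg_half_mul_mpow_half (hA : A.PosDef) : mpow A (-(1/2)) * mpow A (1/2) = 1 := by
  rw [mpow_mul_mpow hA, neg_add_cancel, mpow_zero hA.isHermitian]

lemma mpow_neg_half_mul_self (hA : A.PosDef) : mpow A (-(1/2)) * mpow A (-(1/2)) = A⁻¹ := by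
  refine (Matrix.inv_eq_left_inv ?_).symm
  nth_rw 3 [← mpow_one hA.isHermitian]
  rw [mpow_mul_mpow hA, mpow_mul_mpow hA]
  norm_num [mpow_zero hA.isHermitian]

lemma mpow_half_conj_mpow_neg_half_conj (hA : A.PosDef) (X : Matrix (Fin n) (Fin n) ℂ) :
    mpow A (1/2) * (mpow A (-(1/2)) * X * mpow A (-(1/2))) * mpow A (1/2) = X := by
  simp only [← mul_assoc, mpow_half_mul_mpow_neg_half hA, one_mul]
  rw [mul_assoc, mpow_neg_half_mul_mpow_half hA, mul_one]

end mpow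

section amean

variable {n : ℕ} {X Y U V : Matrix (Fin n) (Fin n) ℂ} {t : ℝ}

lemma amean_comm (X Y : Matrix (Fin n) (Fin n) ℂ) (t : ℝ) :
    amean X Y t = amean Y X (1 - t) := by
  simp only [amean, sub_sub_cancel]
  exact add_comm _ _

lemma amean_sub_amean (X U V : Matrix (Fin n) (Fin n) ℂ) (t : ℝ) :
    amean X V t - amean X U t = ((t : ℝ) : ℂ) • (V - U) := by
  simp only [amean, smul_sub]
  abel

lemma posDef_amean (hX : X.PosDef) (hY : Y.PosSemidef) (ht0 : 0 ≤ t) (ht1 : t < 1) :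
    (amean X Y t).PosDef :=
  (hX.smul (Complex.zero_lt_real.mpr (sub_pos.mpr ht1))).add_posSemidef
    (hY.smul (Complex.zero_le_real.mpr ht0))

lemma le_of_amean_mul_self_le (hX : X.PosDef) (hU : U.PosSemidef) (hV : V.PosSemidef)
    (ht0 : 0 < t) (ht1 : t < 1) (h : amean X U t * amean X U t ≤ amean X V t * amean X V t) :
    U ≤ V := by
  have hU' := posDef_amean hX hU ht0.le ht1
  have hV' := posDef_amean hX hV ht0.le ht1
  have hle := Matrix.le_of_mul_self_le_mul_self hU'.isHermitian hV'.isHermitian (hU'.add hV') h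
  rw [Matrix.le_iff, amean_sub_amean] at hle
  have := hle.smul (Complex.zero_le_real.mpr (inv_nonneg.mpr ht0.le))
  rwa [smul_smul, ← Complex.ofReal_mul, inv_mul_cancel₀ ht0.ne', Complex.ofReal_one, one_smul]
    at this

end amean

def relSqrt {n : ℕ} (A B : Matrix (Fin n) (Fin n) ℂ) : Matrix (Fin n) (Fin n) ℂ :=
  mpow (mpow A (-(1/2)) * B * mpow A (-(1/2))) (1/2)

section relSqrt

variable {n : ℕ} {A B : Matrix (Fin n) (Fin n) ℂ}

lemma gmean_half_eq_s18 (A B : Matrix (Fin n) (Fin n) ℂ) :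
    gmean A B (1/2) = mpow A (1/2) * relSqrt A B * mpow A (1/2) := rfl

lemma posDef_mpow_neg_half_conj (hA : A.PosDef) (hB : B.PosDef) :
    (mpow A (-(1/2)) * B * mpow A (-(1/2))).PosDef :=
  hB.conj_posDef (posDef_mpow hA _)

lemma posDef_relSqrt (hA : A.PosDef) (hB : B.PosDef) : (relSqrt A B).PosDef :=
  posDef_mpow (posDef_mpow_neg_half_conj hA hB) _

lemma relSqrt_mul_self (hA : A.PosDef) (hB : B.PosDef) :
    relSqrt A B * relSqrt A B = mpow A (-(1/2)) * B * mpow A (-(1/2)) :=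
  mpow_half_mul_self (posDef_mpow_neg_half_conj hA hB)

lemma relSqrt_self (hA : A.PosDef) : relSqrt A A = 1 := by
  have h : mpow A (-(1/2)) * A * mpow A (-(1/2)) = 1 := by
    nth_rw 2 [← mpow_half_mul_self hA]
    simp only [← mul_assoc, mpow_neg_half_mul_mpow_half hA, one_mul,
      mpow_half_mul_mpow_neg_half hA]
  rw [relSqrt, h, one_mpow]

lemma gmean_self (hA : A.PosDef) : gmean A A (1/2) = A := by
  rw [gmean_half_eq_s18, relSqrt_self hA, mul_one, mpow_half_mul_self hA]

lemma le_of_one_le_relSqrt (hA : A.PosDef) (hB : B.PosDef) (h : 1 ≤ relSqrt A B) : A ≤ B := by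
  have hM := one_le_of_one_le_mpow (posDef_mpow_neg_half_conj hA hB).posSemidef one_half_pos h
  have := (isHermitian_mpow (A := A) (1/2)).isSelfAdjoint.conjugate_le_conjugate hM
  rwa [mul_one, mpow_half_mul_self hA, mpow_half_conj_mpow_neg_half_conj hA] at this

lemma le_of_relSqrt_le_one (hA : A.PosDef) (hB : B.PosDef) (h : relSqrt A B ≤ 1) : B ≤ A := by
  have hM := le_one_of_mpow_le_one (posDef_mpow_neg_half_conj hA hB).isHermitian one_half_pos h
  have := (isHermitian_mpow (A := A) (1/2)).isSelfAdjoint.conjugate_le_conjugate hM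
  rwa [mul_one, mpow_half_mul_self hA, mpow_half_conj_mpow_neg_half_conj hA] at this

end relSqrt

section wmean

variable {n : ℕ} {A B : Matrix (Fin n) (Fin n) ℂ} {t : ℝ}

lemma wmean_eq (X Y : Matrix (Fin n) (Fin n) ℂ) (t : ℝ) :
    wmean X Y t = amean 1 (gmean X⁻¹ Y (1/2)) t * X * amean 1 (gmean X⁻¹ Y (1/2)) t := rfl

lemma mpow_neg_half_conj_wmean_inv (hA : A.PosDef) (Y : Matrix (Fin n) (Fin n) ℂ) (t : ℝ) :
    mpow A (-(1/2)) * wmean A⁻¹ Y t * mpow A (-(1/2)) =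
      amean A⁻¹ (relSqrt A Y) t * amean A⁻¹ (relSqrt A Y) t := by
  have hconj : mpow A (-(1/2)) * amean 1 (gmean A Y (1/2)) t * mpow A (-(1/2)) =
      amean A⁻¹ (relSqrt A Y) t := by
    rw [gmean_half_eq_s18, amean, amean, ← mpow_neg_half_mul_self hA]
    simp only [mul_add, add_mul, mul_smul_comm, smul_mul_assoc, mul_one, ← mul_assoc,
      mpow_neg_half_mul_mpow_half hA, one_mul]
    rw [mul_assoc _ (mpow A (1/2)), mpow_half_mul_mpow_neg_half hA, mul_one]
  rw [wmean_eq, hA.inv_inv, ← hconj, ← mpow_neg_half_mul_self hA]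
  simp only [mul_assoc]

lemma mpow_half_conj_relSqrt_mul_self (hA : A.PosDef) (hB : B.PosDef) :
    mpow A (1/2) * (relSqrt A B * relSqrt A B) * mpow A (1/2) = B := by
  rw [relSqrt_mul_self hA hB, mpow_half_conj_mpow_neg_half_conj hA]

lemma relSqrt_conj_wmean_inv (hA : A.PosDef) (t : ℝ) :
    relSqrt A B * mpow A (1/2) * wmean A⁻¹ B t * (mpow A (1/2) * relSqrt A B) =
      amean (relSqrt A B) (relSqrt A B * A * relSqrt A B) t *
        amean (relSqrt A B) (relSqrt A B * A * relSqrt A B) t := by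
  have hQP : ∀ X, mpow A (1/2) * (mpow A (-(1/2)) * X) = X := fun X => by
    rw [← mul_assoc, mpow_half_mul_mpow_neg_half hA, one_mul]
  have hPQ : ∀ X, mpow A (-(1/2)) * (mpow A (1/2) * X) = X := fun X => by
    rw [← mul_assoc, mpow_neg_half_mul_mpow_half hA, one_mul]
  have hQQ : ∀ X, mpow A (1/2) * (mpow A (1/2) * X) = A * X := fun X => by
    rw [← mul_assoc, mpow_half_mul_self hA]
  rw [wmean_eq, hA.inv_inv, ← mpow_neg_half_mul_self hA, gmean_half_eq_s18]
  simp only [amean, mul_add, add_mul, mul_smul_comm, smul_mul_assoc, mul_one, one_mul, mul_assoc,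
    hQP, hPQ, hQQ]

lemma conj_amean_mul_inv_mul_amean {X : Matrix (Fin n) (Fin n) ℂ} (hX : IsUnit X.det)
    (t : ℝ) :
    X * (amean 1 (Xᴴ * X) t * (Xᴴ * X)⁻¹ * amean 1 (Xᴴ * X) t) * Xᴴ =
      amean 1 (X * Xᴴ) t * amean 1 (X * Xᴴ) t := by
  have hL : X * amean 1 (Xᴴ * X) t = amean 1 (X * Xᴴ) t * X := by
    simp only [amean, mul_add, add_mul, mul_smul_comm, smul_mul_assoc, mul_one, one_mul, mul_assoc]
  have hR : amean 1 (Xᴴ * X) t * Xᴴ = Xᴴ * amean 1 (X * Xᴴ) t := by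
    simp only [amean, mul_add, add_mul, mul_smul_comm, smul_mul_assoc, mul_one, one_mul, mul_assoc]
  have hmid : X * (Xᴴ * X)⁻¹ * Xᴴ = 1 := by
    rw [Matrix.mul_inv_rev, ← mul_assoc, Matrix.mul_nonsing_inv _ hX, one_mul,
      Matrix.nonsing_inv_mul _ (by simpa [Matrix.det_conjTranspose] using hX.star)]
  calc X * (amean 1 (Xᴴ * X) t * (Xᴴ * X)⁻¹ * amean 1 (Xᴴ * X) t) * Xᴴ
      = (X * amean 1 (Xᴴ * X) t) * (Xᴴ * X)⁻¹ * (amean 1 (Xᴴ * X) t * Xᴴ) := by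
        simp only [mul_assoc]
    _ = amean 1 (X * Xᴴ) t * (X * (Xᴴ * X)⁻¹ * Xᴴ) * amean 1 (X * Xᴴ) t := by
        rw [hL, hR]; simp only [mul_assoc]
    _ = _ := by rw [hmid, mul_one]

lemma relSqrt_conj_wmean_inv_self (hA : A.PosDef) (hB : B.PosDef) (t : ℝ) :
    relSqrt A B * mpow A (1/2) * wmean B⁻¹ B t * (mpow A (1/2) * relSqrt A B) =
      amean 1 (relSqrt A B * A * relSqrt A B) t * amean 1 (relSqrt A B * A * relSqrt A B) t := by
  have hadj : (relSqrt A B * mpow A (1/2))ᴴ = mpow A (1/2) * relSqrt A B := by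
    rw [Matrix.conjTranspose_mul, (isHermitian_mpow _).eq, relSqrt, (isHermitian_mpow _).eq]
  have hunit : IsUnit (relSqrt A B * mpow A (1/2)).det := (Matrix.isUnit_iff_isUnit_det _).mp
    ((posDef_relSqrt hA hB).isUnit.mul (posDef_mpow hA _).isUnit)
  have hB' : (relSqrt A B * mpow A (1/2))ᴴ * (relSqrt A B * mpow A (1/2)) = B := by
    rw [hadj]
    conv_rhs => rw [← mpow_half_conj_relSqrt_mul_self hA hB]
    simp only [mul_assoc]
  have hN : relSqrt A B * mpow A (1/2) * (relSqrt A B * mpow A (1/2))ᴴ =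
      relSqrt A B * A * relSqrt A B := by
    simp only [hadj, mul_assoc]
    rw [← mul_assoc (mpow A (1/2)), mpow_half_mul_self hA]
  rw [wmean_eq, hB.inv_inv, gmean_self hB, ← hN, ← conj_amean_mul_inv_mul_amean hunit,
    hB', hadj]

end wmean

section comparison

variable {n : ℕ} {A B : Matrix (Fin n) (Fin n) ℂ} {t : ℝ}

lemma one_le_relSqrt_of_wmean_self_le (hA : A.PosDef) (hB : B.PosDef) (ht0 : 0 < t)
    (ht1 : t < 1) (h : wmean A⁻¹ A t ≤ wmean A⁻¹ B t) : 1 ≤ relSqrt A B := by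
  have h' := (isHermitian_mpow (A := A) (-(1/2))).isSelfAdjoint.conjugate_le_conjugate h
  rw [mpow_neg_half_conj_wmean_inv hA, mpow_neg_half_conj_wmean_inv hA, relSqrt_self hA] at h'
  exact le_of_amean_mul_self_le hA.inv Matrix.PosDef.one.posSemidef
    (posDef_relSqrt hA hB).posSemidef ht0 ht1 h'

lemma relSqrt_le_one_of_wmean_le_self (hA : A.PosDef) (hB : B.PosDef) (ht0 : 0 < t)
    (ht1 : t < 1) (h : wmean A⁻¹ B t ≤ wmean A⁻¹ A t) : relSqrt A B ≤ 1 := by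
  have h' := (isHermitian_mpow (A := A) (-(1/2))).isSelfAdjoint.conjugate_le_conjugate h
  rw [mpow_neg_half_conj_wmean_inv hA, mpow_neg_half_conj_wmean_inv hA, relSqrt_self hA] at h'
  exact le_of_amean_mul_self_le hA.inv (posDef_relSqrt hA hB).posSemidef
    Matrix.PosDef.one.posSemidef ht0 ht1 h'

lemma one_le_relSqrt_of_wmean_inv_self_le (hA : A.PosDef) (hB : B.PosDef) (ht0 : 0 < t)
    (ht1 : t < 1) (h : wmean B⁻¹ B t ≤ wmean A⁻¹ B t) : 1 ≤ relSqrt A B := by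
  have h' := star_left_conjugate_le_conjugate h (mpow A (1/2) * relSqrt A B)
  rw [star_mul, (posDef_relSqrt hA hB).isHermitian.isSelfAdjoint.star_eq,
    (isHermitian_mpow _).isSelfAdjoint.star_eq,
    relSqrt_conj_wmean_inv_self hA hB, relSqrt_conj_wmean_inv hA, amean_comm 1,
    amean_comm (relSqrt A B)] at h'
  exact le_of_amean_mul_self_le (hA.conj_posDef (posDef_relSqrt hA hB))
    Matrix.PosDef.one.posSemidef (posDef_relSqrt hA hB).posSemidef (sub_pos.mpr ht1)
    (by linarith) h'

lemma relSqrt_le_one_of_wmean_le_inv_self (hA : A.PosDef) (hB : B.PosDef) (ht0 : 0 < t)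
    (ht1 : t < 1) (h : wmean A⁻¹ B t ≤ wmean B⁻¹ B t) : relSqrt A B ≤ 1 := by
  have h' := star_left_conjugate_le_conjugate h (mpow A (1/2) * relSqrt A B)
  rw [star_mul, (posDef_relSqrt hA hB).isHermitian.isSelfAdjoint.star_eq,
    (isHermitian_mpow _).isSelfAdjoint.star_eq,
    relSqrt_conj_wmean_inv_self hA hB, relSqrt_conj_wmean_inv hA, amean_comm 1,
    amean_comm (relSqrt A B)] at h'
  exact le_of_amean_mul_self_le (hA.conj_posDef (posDef_relSqrt hA hB))
    (posDef_relSqrt hA hB).posSemidef Matrix.PosDef.one.posSemidef (sub_pos.mpr ht1)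
    (by linarith) h'

end comparison

/-- for `t ∈ (0,1)`, each of the four Loewner inequalities between
Wasserstein means implies `A ≤ B`. -/
theorem wmean_loewner_implies_loewner {n : ℕ} (A B : Matrix (Fin n) (Fin n) ℂ)
    (hA : A.PosDef) (hB : B.PosDef) (t : ℝ) (ht0 : 0 < t) (ht1 : t < 1)
    (hyp : LoewnerLE (wmean A⁻¹ A t) (wmean A⁻¹ B t) ∨
      LoewnerLE (wmean B⁻¹ B t) (wmean A⁻¹ B t) ∨
      LoewnerLE (wmean B⁻¹ A t) (wmean A⁻¹ A t) ∨
      LoewnerLE (wmean B⁻¹ A t) (wmean B⁻¹ B t)) :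
    LoewnerLE A B := by
  rcases hyp with h | h | h | h
  · exact le_of_one_le_relSqrt hA hB (one_le_relSqrt_of_wmean_self_le hA hB ht0 ht1 h)
  · exact le_of_one_le_relSqrt hA hB (one_le_relSqrt_of_wmean_inv_self_le hA hB ht0 ht1 h)
  · exact le_of_relSqrt_le_one hB hA (relSqrt_le_one_of_wmean_le_inv_self hB hA ht0 ht1 h)
  · exact le_of_relSqrt_le_one hB hA (relSqrt_le_one_of_wmean_le_self hB hA ht0 ht1 h)
end
end
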